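/- arXiv:2402.04496 — 3 statements merged into one kernel-verified Lean document; each statement's English description precedes it below -/
import Mathlib

section
/- Let F be a Banach space. A bounded linear operator u : c_0 → F is absolutely 1-summing if and only if ∑_{j=1}^∞ ‖u(e_j)‖ < +∞, and in this case the absolutely summing norm satisfies π_1(u) = ∑_{j=1}^∞ ‖u(e_j)‖. In particular, for every sequence (x_j)_{j=1}^∞ in F with ∑_{j=1}^∞ ‖x_j‖ < +∞ there is a unique absolutely 1-summing operator u : c_0 → F with u(e_j) = x_j for every j, and π_1(u) = ∑_{j=1}^∞ ‖x_j‖. -/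
/-! Testing the 1-summing inequality on `e_0, …, e_{m-1}` bounds every partial sum of
`∑ ‖u e_j‖` by any admissible constant, because `∑_{k<m} ‖φ e_k‖ ≤ ‖φ‖` for every functional
`φ` on `c₀` (evaluate `φ` at `∑ c_k e_k` with unimodular `c_k` aligning the phases of the
`φ e_k`). Conversely, if `∑ ‖u e_j‖ < ∞` then `u y = ∑ y_j • u e_j`, whence
`∑_k ‖u y_k‖ ≤ ∑_j (∑_k |y_k(j)|) ‖u e_j‖`, and each inner sum is at most
`sup_{‖φ‖ ≤ 1} ∑_k |φ y_k|` since coordinate evaluations are functionals of norm `≤ 1`.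
Finally `y ↦ ∑ y_j • x_j` realizes any absolutely summable `(x_j)`, and the expansion
`y = ∑ y_j e_j` makes it unique. -/

open Filter Topology
open scoped ENNReal NNReal

/-- The `j`-th canonical unit vector of `c₀`. -/
noncomputable def c0single (𝕜 : Type*) [RCLike 𝕜] (j : ℕ) : ZeroAtInftyContinuousMap ℕ 𝕜 where
  toFun := fun i => if i = j then 1 else 0
  continuous_toFun := continuous_of_discreteTopology
  zero_at_infty' := by
    have h : (fun i : ℕ => if i = j then (1 : 𝕜) else 0) =ᶠ[Filter.cocompact ℕ]
        (fun _ => (0 : 𝕜)) := by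
      rw [cocompact_eq_atTop]
      filter_upwards [eventually_gt_atTop j] with i hi
      simp [hi.ne']
    exact Tendsto.congr' h.symm tendsto_const_nhds

/-- `u` is absolutely `p`-summing with constant `C`:
`(∑_{k<m} ‖u(y_k)‖^p)^{1/p} ≤ C ⬝ sup_{‖φ‖ ≤ 1} (∑_{k<m} |φ(y_k)|^p)^{1/p}`
for every `m` and all `y_0, …, y_{m-1}`. -/
def IsPSummingWith (𝕜 : Type*) [RCLike 𝕜] {E F : Type*} [NormedAddCommGroup E]
    [NormedSpace 𝕜 E] [NormedAddCommGroup F] [NormedSpace 𝕜 F] (p : ℝ) (u : E →L[𝕜] F)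
    (C : ℝ) : Prop :=
  ∀ (m : ℕ) (y : ℕ → E),
    (∑ k ∈ Finset.range m, ‖u (y k)‖ ^ p) ^ (1 / p) ≤
      C * sSup {r : ℝ | ∃ φ : E →L[𝕜] 𝕜, ‖φ‖ ≤ 1 ∧
        r = (∑ k ∈ Finset.range m, ‖φ (y k)‖ ^ p) ^ (1 / p)}

/-- `u` is absolutely `p`-summing if it is so with some constant `C ≥ 0`. -/
def IsPSumming (𝕜 : Type*) [RCLike 𝕜] {E F : Type*} [NormedAddCommGroup E]
    [NormedSpace 𝕜 E] [NormedAddCommGroup F] [NormedSpace 𝕜 F] (p : ℝ)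
    (u : E →L[𝕜] F) : Prop :=
  ∃ C : ℝ, 0 ≤ C ∧ IsPSummingWith 𝕜 p u C

/-- The absolutely `p`-summing norm `π_p(u)`: the least admissible constant. -/
noncomputable def piNorm (𝕜 : Type*) [RCLike 𝕜] {E F : Type*} [NormedAddCommGroup E]
    [NormedSpace 𝕜 E] [NormedAddCommGroup F] [NormedSpace 𝕜 F] (p : ℝ)
    (u : E →L[𝕜] F) : ℝ :=
  sInf {C : ℝ | 0 ≤ C ∧ IsPSummingWith 𝕜 p u C}

open scoped ZeroAtInfty
open Finset

namespace ZeroAtInftyContinuousMap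

variable {α β : Type*} [TopologicalSpace α] [SeminormedAddCommGroup β]

theorem norm_apply_le (f : C₀(α, β)) (x : α) : ‖f x‖ ≤ ‖f‖ := by
  rw [← norm_toBCF_eq_norm]
  exact f.toBCF.norm_coe_le_norm x

theorem norm_le_iff [Nonempty α] {f : C₀(α, β)} {M : ℝ} : ‖f‖ ≤ M ↔ ∀ x, ‖f x‖ ≤ M := by
  rw [← norm_toBCF_eq_norm]
  exact BoundedContinuousFunction.norm_le_of_nonempty

variable (𝕜 : Type*) [NontriviallyNormedField 𝕜] [NormedSpace 𝕜 β]

noncomputable def evalCLM (x : α) : C₀(α, β) →L[𝕜] β :=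
  LinearMap.mkContinuous
    { toFun := fun f => f x
      map_add' := fun _ _ => rfl
      map_smul' := fun _ _ => rfl } 1
    (fun f => by simpa using f.norm_apply_le x)

variable {𝕜}

@[simp]
theorem evalCLM_apply (x : α) (f : C₀(α, β)) : evalCLM 𝕜 x f = f x := rfl

theorem norm_evalCLM_le (x : α) : ‖(evalCLM 𝕜 x : C₀(α, β) →L[𝕜] β)‖ ≤ 1 :=
  LinearMap.mkContinuous_norm_le _ zero_le_one _

end ZeroAtInftyContinuousMap

section CZero

variable {𝕜 : Type*} [RCLike 𝕜]

theorem c0single_apply (j i : ℕ) : c0single 𝕜 j i = if i = j then 1 else 0 := rfl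

theorem sum_smul_c0single_apply (s : Finset ℕ) (c : ℕ → 𝕜) (i : ℕ) :
    (∑ j ∈ s, c j • c0single 𝕜 j) i = if i ∈ s then c i else 0 := by
  rw [← ZeroAtInftyContinuousMap.evalCLM_apply (𝕜 := 𝕜), map_sum]
  simp [c0single_apply]

theorem hasSum_smul_c0single (y : C₀(ℕ, 𝕜)) : HasSum (fun j => y j • c0single 𝕜 j) y := by
  rw [HasSum, Metric.tendsto_nhds]
  intro ε hε
  have hy : Tendsto y atTop (𝓝 0) := cocompact_eq_atTop (α := ℕ) ▸ zero_at_infty y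
  obtain ⟨N, hN⟩ := eventually_atTop.1 <|
    (NormedAddGroup.tendsto_nhds_zero.1 hy) (ε / 2) (half_pos hε)
  filter_upwards [eventually_ge_atTop (range N)] with s hs
  rw [dist_eq_norm]
  refine lt_of_le_of_lt (ZeroAtInftyContinuousMap.norm_le_iff.2 fun i => ?_) (half_lt_self hε)
  rw [ZeroAtInftyContinuousMap.sub_apply, sum_smul_c0single_apply]
  split_ifs with hi
  · simpa using (half_pos hε).le
  · rw [zero_sub, norm_neg]
    exact (hN i (not_lt.1 fun h => hi (hs (mem_range.2 h)))).le

theorem summable_norm_apply_mul (y : C₀(ℕ, 𝕜)) {a : ℕ → ℝ} (ha : Summable a) (ha0 : 0 ≤ a) :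
    Summable fun j => ‖y j‖ * a j :=
  (ha.mul_left ‖y‖).of_nonneg_of_le (fun j => mul_nonneg (norm_nonneg _) (ha0 j))
    fun j => mul_le_mul_of_nonneg_right (y.norm_apply_le j) (ha0 j)

variable {F : Type*} [NormedAddCommGroup F] [NormedSpace 𝕜 F]

theorem ContinuousLinearMap.hasSum_smul_apply_c0single (v : C₀(ℕ, 𝕜) →L[𝕜] F) (y : C₀(ℕ, 𝕜)) :
    HasSum (fun j => y j • v (c0single 𝕜 j)) (v y) := by
  simpa using (hasSum_smul_c0single y).mapL v

theorem ContinuousLinearMap.ext_c0single {v w : C₀(ℕ, 𝕜) →L[𝕜] F}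
    (h : ∀ j, v (c0single 𝕜 j) = w (c0single 𝕜 j)) : v = w := by
  ext y
  refine (v.hasSum_smul_apply_c0single y).unique ?_
  simpa only [h] using w.hasSum_smul_apply_c0single y

theorem ContinuousLinearMap.norm_apply_le_tsum (v : C₀(ℕ, 𝕜) →L[𝕜] F)
    (hv : Summable fun j => ‖v (c0single 𝕜 j)‖) (y : C₀(ℕ, 𝕜)) :
    ‖v y‖ ≤ ∑' j, ‖y j‖ * ‖v (c0single 𝕜 j)‖ :=
  (v.hasSum_smul_apply_c0single y).norm_le_of_bounded
    (summable_norm_apply_mul y hv fun _ => norm_nonneg _).hasSum fun _ => (norm_smul _ _).le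

variable [CompleteSpace F]

theorem summable_smul_of_summable_norm {x : ℕ → F} (hx : Summable fun j => ‖x j‖)
    (y : C₀(ℕ, 𝕜)) : Summable fun j => y j • x j :=
  .of_norm <| (summable_norm_apply_mul y hx fun _ => norm_nonneg _).congr fun _ =>
    (norm_smul _ _).symm

noncomputable def c0opOfSummable (x : ℕ → F) (hx : Summable fun j => ‖x j‖) : C₀(ℕ, 𝕜) →L[𝕜] F :=
  LinearMap.mkContinuous
    { toFun := fun y => ∑' j, y j • x j
      map_add' := fun a b => by
        simp only [ZeroAtInftyContinuousMap.add_apply, add_smul]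
        exact (summable_smul_of_summable_norm hx a).tsum_add (summable_smul_of_summable_norm hx b)
      map_smul' := fun c a => by
        simp only [ZeroAtInftyContinuousMap.smul_apply, smul_eq_mul, mul_smul, RingHom.id_apply]
        exact (summable_smul_of_summable_norm hx a).tsum_const_smul c }
    (∑' j, ‖x j‖)
    fun y => by
      rw [mul_comm]
      exact tsum_of_norm_bounded (hx.hasSum.mul_left ‖y‖) fun j => by
        rw [norm_smul]
        exact mul_le_mul_of_nonneg_right (y.norm_apply_le j) (norm_nonneg _)

theorem c0opOfSummable_c0single (x : ℕ → F) (hx : Summable fun j => ‖x j‖) (j : ℕ) :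
    c0opOfSummable (𝕜 := 𝕜) x hx (c0single 𝕜 j) = x j := by
  simp [c0opOfSummable, c0single_apply]

end CZero

section WeakNorm

variable (𝕜 : Type*) [RCLike 𝕜] {E : Type*} [NormedAddCommGroup E] [NormedSpace 𝕜 E]

noncomputable def weakL1Norm (m : ℕ) (y : ℕ → E) : ℝ :=
  sSup {r : ℝ | ∃ φ : E →L[𝕜] 𝕜, ‖φ‖ ≤ 1 ∧ r = ∑ k ∈ range m, ‖φ (y k)‖}

variable {𝕜}

theorem isPSummingWith_one_iff {F : Type*} [NormedAddCommGroup F] [NormedSpace 𝕜 F]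
    {u : E →L[𝕜] F} {C : ℝ} :
    IsPSummingWith 𝕜 1 u C ↔ ∀ m y, ∑ k ∈ range m, ‖u (y k)‖ ≤ C * weakL1Norm 𝕜 m y := by
  simp [IsPSummingWith, weakL1Norm]

theorem sum_norm_apply_le_weakL1Norm {φ : E →L[𝕜] 𝕜} (hφ : ‖φ‖ ≤ 1) (m : ℕ) (y : ℕ → E) :
    ∑ k ∈ range m, ‖φ (y k)‖ ≤ weakL1Norm 𝕜 m y := by
  refine le_csSup ⟨∑ k ∈ range m, ‖y k‖, ?_⟩ ⟨φ, hφ, rfl⟩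
  rintro r ⟨ψ, hψ, rfl⟩
  exact sum_le_sum fun k _ => ψ.le_of_opNorm_le hψ (y k) |>.trans_eq (one_mul _)

theorem weakL1Norm_le {m : ℕ} {y : ℕ → E} {M : ℝ} (hM : 0 ≤ M)
    (h : ∀ φ : E →L[𝕜] 𝕜, ‖φ‖ ≤ 1 → ∑ k ∈ range m, ‖φ (y k)‖ ≤ M) :
    weakL1Norm 𝕜 m y ≤ M :=
  Real.sSup_le (by rintro r ⟨φ, hφ, rfl⟩; exact h φ hφ) hM

end WeakNorm

section Summing

variable {𝕜 : Type*} [RCLike 𝕜]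

theorem RCLike.exists_norm_le_one_mul_eq_norm (a : 𝕜) : ∃ c : 𝕜, ‖c‖ ≤ 1 ∧ c * a = ‖a‖ := by
  rcases eq_or_ne a 0 with rfl | ha
  · exact ⟨0, by simp⟩
  · refine ⟨‖a‖ / a, ?_, div_mul_cancel₀ _ ha⟩
    simp [norm_div, ha]

theorem sum_norm_apply_c0single_le_opNorm (φ : C₀(ℕ, 𝕜) →L[𝕜] 𝕜) (m : ℕ) :
    ∑ k ∈ range m, ‖φ (c0single 𝕜 k)‖ ≤ ‖φ‖ := by
  choose c hc1 hc using fun k => RCLike.exists_norm_le_one_mul_eq_norm (φ (c0single 𝕜 k))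
  set z := ∑ k ∈ range m, c k • c0single 𝕜 k
  have hz : ‖z‖ ≤ 1 := ZeroAtInftyContinuousMap.norm_le_iff.2 fun i => by
    rw [sum_smul_c0single_apply]
    split_ifs
    exacts [hc1 i, by simp]
  have hφz : φ z = ((∑ k ∈ range m, ‖φ (c0single 𝕜 k)‖ : ℝ) : 𝕜) := by
    simp [z, map_sum, hc]
  calc ∑ k ∈ range m, ‖φ (c0single 𝕜 k)‖ = ‖φ z‖ := by
        rw [hφz, RCLike.norm_ofReal, abs_of_nonneg (sum_nonneg fun _ _ => norm_nonneg _)]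
    _ ≤ ‖φ‖ := φ.le_of_opNorm_le_of_le le_rfl hz |>.trans_eq (mul_one _)

theorem weakL1Norm_c0single_le_one (m : ℕ) : weakL1Norm 𝕜 m (c0single 𝕜) ≤ 1 :=
  weakL1Norm_le zero_le_one fun φ hφ => (sum_norm_apply_c0single_le_opNorm φ m).trans hφ

variable {F : Type*} [NormedAddCommGroup F] [NormedSpace 𝕜 F] {u : C₀(ℕ, 𝕜) →L[𝕜] F}

theorem IsPSummingWith.sum_range_le {C : ℝ} (hC : IsPSummingWith 𝕜 1 u C) (hC0 : 0 ≤ C)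
    (m : ℕ) : ∑ k ∈ range m, ‖u (c0single 𝕜 k)‖ ≤ C :=
  calc ∑ k ∈ range m, ‖u (c0single 𝕜 k)‖ ≤ C * weakL1Norm 𝕜 m (c0single 𝕜) :=
        isPSummingWith_one_iff.1 hC m _
    _ ≤ C := mul_le_of_le_one_right hC0 (weakL1Norm_c0single_le_one m)

theorem IsPSummingWith.summable {C : ℝ} (hC : IsPSummingWith 𝕜 1 u C) (hC0 : 0 ≤ C) :
    Summable fun j => ‖u (c0single 𝕜 j)‖ :=
  summable_of_sum_range_le (fun _ => norm_nonneg _) (hC.sum_range_le hC0)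

theorem IsPSummingWith.tsum_le {C : ℝ} (hC : IsPSummingWith 𝕜 1 u C) (hC0 : 0 ≤ C) :
    ∑' j, ‖u (c0single 𝕜 j)‖ ≤ C :=
  (hC.summable hC0).tsum_le_of_sum_range_le (hC.sum_range_le hC0)

theorem isPSummingWith_tsum (hu : Summable fun j => ‖u (c0single 𝕜 j)‖) :
    IsPSummingWith 𝕜 1 u (∑' j, ‖u (c0single 𝕜 j)‖) := by
  rw [isPSummingWith_one_iff]
  intro m y
  set a := fun j => ‖u (c0single 𝕜 j)‖
  set w := weakL1Norm 𝕜 m y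
  have ha0 : 0 ≤ a := fun _ => norm_nonneg _
  have hcoord (j : ℕ) : ∑ k ∈ range m, ‖y k j‖ ≤ w :=
    sum_norm_apply_le_weakL1Norm (ZeroAtInftyContinuousMap.norm_evalCLM_le (𝕜 := 𝕜) (β := 𝕜) j) m y
  have hs : ∀ k, Summable fun j => ‖y k j‖ * a j := fun k => summable_norm_apply_mul (y k) hu ha0
  calc ∑ k ∈ range m, ‖u (y k)‖ ≤ ∑ k ∈ range m, ∑' j, ‖y k j‖ * a j :=
        sum_le_sum fun k _ => u.norm_apply_le_tsum hu (y k)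
    _ = ∑' j, (∑ k ∈ range m, ‖y k j‖) * a j := by
        simp_rw [sum_mul]
        exact (Summable.tsum_finsetSum fun k _ => hs k).symm
    _ ≤ ∑' j, w * a j := by
        refine Summable.tsum_le_tsum (fun j => mul_le_mul_of_nonneg_right (hcoord j) (ha0 j))
          ?_ (hu.mul_left w)
        simpa only [sum_mul] using summable_sum fun k _ => hs k
    _ = (∑' j, a j) * w := by rw [tsum_mul_left, mul_comm]

theorem isPSumming_one_iff_summable :
    IsPSumming 𝕜 1 u ↔ Summable fun j => ‖u (c0single 𝕜 j)‖ :=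
  ⟨fun ⟨_, hC0, hC⟩ => hC.summable hC0,
    fun hu => ⟨_, tsum_nonneg fun _ => norm_nonneg _, isPSummingWith_tsum hu⟩⟩

theorem piNorm_one_eq_tsum (hu : IsPSumming 𝕜 1 u) :
    piNorm 𝕜 1 u = ∑' j, ‖u (c0single 𝕜 j)‖ :=
  IsLeast.csInf_eq ⟨⟨tsum_nonneg fun _ => norm_nonneg _,
    isPSummingWith_tsum (isPSumming_one_iff_summable.1 hu)⟩, fun _ ⟨hC0, hC⟩ => hC.tsum_le hC0⟩

end Summing

/-- A bounded operator `u : c₀ → F` is absolutely `1`-summing iff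
`∑_j ‖u(e_j)‖ < ∞`, in which case `π₁(u) = ∑_j ‖u(e_j)‖`; and for every `(x_j)` with
`∑_j ‖x_j‖ < ∞` there is a unique absolutely `1`-summing operator `u : c₀ → F` with
`u(e_j) = x_j` for all `j`, and `π₁(u) = ∑_j ‖x_j‖`. -/
theorem stmt_9 {𝕜 : Type*} [RCLike 𝕜] {F : Type*} [NormedAddCommGroup F] [NormedSpace 𝕜 F]
    [CompleteSpace F] (u : ZeroAtInftyContinuousMap ℕ 𝕜 →L[𝕜] F) :
    (IsPSumming 𝕜 1 u ↔ Summable fun j => ‖u (c0single 𝕜 j)‖) ∧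
    (IsPSumming 𝕜 1 u → piNorm 𝕜 1 u = ∑' j, ‖u (c0single 𝕜 j)‖) ∧
    ∀ x : ℕ → F, (Summable fun j => ‖x j‖) →
      (∃! v : ZeroAtInftyContinuousMap ℕ 𝕜 →L[𝕜] F,
        IsPSumming 𝕜 1 v ∧ ∀ j, v (c0single 𝕜 j) = x j) ∧
      ∀ v : ZeroAtInftyContinuousMap ℕ 𝕜 →L[𝕜] F,
        (IsPSumming 𝕜 1 v ∧ ∀ j, v (c0single 𝕜 j) = x j) →
          piNorm 𝕜 1 v = ∑' j, ‖x j‖ := by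
  refine ⟨isPSumming_one_iff_summable, piNorm_one_eq_tsum, fun x hx => ⟨?_, ?_⟩⟩
  · have hx' := c0opOfSummable_c0single (𝕜 := 𝕜) x hx
    refine ⟨c0opOfSummable x hx,
      ⟨isPSumming_one_iff_summable.2 (by simpa only [hx'] using hx), hx'⟩, ?_⟩
    rintro v ⟨-, hv⟩
    exact ContinuousLinearMap.ext_c0single fun j => by rw [hv, hx']
  · rintro v ⟨hv, hvx⟩
    simp only [piNorm_one_eq_tsum hv, hvx]
end

section
/- Let F be a Banach space, 1 < p < ∞, p* = p/(p−1), and let u : ℓ_{p*} → F be a bounded linear operator. Then the following are equivalent: (i) for every weakly p-summable sequence (y_j)_{j=1}^∞ in ℓ_{p*}, lim_{j→∞} ‖u(y_j)‖ = 0; (ii) for every weakly p-summable sequence (y_j)_{j=1}^∞ in ℓ_{p*}, the sequence (u(y_j))_{j=1}^∞ is unconditionally p-summable in F. -/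
/-! If the weak `p`-norms of the tails of `(u y_j)` do not tend to zero they all exceed some
`r > 0`, so every tail contains a finite block on which some norm-one functional `φ` has
`∑ |φ (u y_j)|^p > r^p`. Combining the `y_j` of that block with the coefficients of the equality
case of Hölder's inequality gives a vector `z` with `r < ‖u z‖` whose functionals satisfy
`|ψ z|^p ≤ ∑_block |ψ y_j|^p`. Taking disjoint blocks yields a weakly `p`-summable sequence
`(z_k)` with `‖u z_k‖ > r`, contradicting (i). Conversely, Hahn–Banach bounds `‖x_n‖` by the
weak `p`-norm of the tail starting at `n`. -/

open Filter Topology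
open scoped ENNReal NNReal

/-- The weak `ℓ_p` "norm" of a Banach-space valued sequence, valued in `ℝ≥0∞`:
`sup_{‖φ‖ ≤ 1} (∑_j |φ(x_j)|^p)^{1/p}`. -/
noncomputable def weakLpNorm (𝕜 : Type*) [RCLike 𝕜] {X : Type*} [NormedAddCommGroup X]
    [NormedSpace 𝕜 X] (p : ℝ) (x : ℕ → X) : ℝ≥0∞ :=
  ⨆ φ ∈ {φ : X →L[𝕜] 𝕜 | ‖φ‖ ≤ 1}, (∑' j, (‖φ (x j)‖₊ : ℝ≥0∞) ^ p) ^ (1 / p)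

/-- A sequence is weakly `p`-summable if `(φ(x_j))_j ∈ ℓ_p` for every continuous functional. -/
def WeaklyLpSummable (𝕜 : Type*) [RCLike 𝕜] {X : Type*} [NormedAddCommGroup X]
    [NormedSpace 𝕜 X] (p : ℝ) (x : ℕ → X) : Prop :=
  ∀ φ : X →L[𝕜] 𝕜, Summable fun j => ‖φ (x j)‖ ^ p

/-- A sequence is unconditionally `p`-summable if it is weakly `p`-summable and the weak
`p`-norms of its tails tend to zero. -/
def UncondLpSummable (𝕜 : Type*) [RCLike 𝕜] {X : Type*} [NormedAddCommGroup X]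
    [NormedSpace 𝕜 X] (p : ℝ) (x : ℕ → X) : Prop :=
  WeaklyLpSummable 𝕜 p x ∧
    Tendsto (fun n : ℕ => weakLpNorm 𝕜 p fun j => x (n + j)) atTop (𝓝 (0 : ℝ≥0∞))

open Function

section WeakLpNorm

variable {𝕜 : Type*} [RCLike 𝕜] {X : Type*} [NormedAddCommGroup X] [NormedSpace 𝕜 X] {p : ℝ}

lemma le_weakLpNorm (x : ℕ → X) {φ : X →L[𝕜] 𝕜} (hφ : ‖φ‖ ≤ 1) :
    (∑' j, (‖φ (x j)‖₊ : ℝ≥0∞) ^ p) ^ (1 / p) ≤ weakLpNorm 𝕜 p x :=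
  le_iSup₂ (f := fun (φ : X →L[𝕜] 𝕜) _ => (∑' j, (‖φ (x j)‖₊ : ℝ≥0∞) ^ p) ^ (1 / p)) φ hφ

lemma nnnorm_le_weakLpNorm (hp : 0 < p) (x : ℕ → X) :
    (‖x 0‖₊ : ℝ≥0∞) ≤ weakLpNorm 𝕜 p x := by
  obtain ⟨g, hg, hgx⟩ := exists_dual_vector'' 𝕜 (x 0)
  have hgx' : (‖g (x 0)‖₊ : ℝ≥0∞) = ‖x 0‖₊ := by simp [hgx]
  calc (‖x 0‖₊ : ℝ≥0∞) = ((‖g (x 0)‖₊ : ℝ≥0∞) ^ p) ^ (1 / p) := by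
        rw [← ENNReal.rpow_mul, mul_one_div_cancel hp.ne', ENNReal.rpow_one, hgx']
    _ ≤ (∑' j, (‖g (x j)‖₊ : ℝ≥0∞) ^ p) ^ (1 / p) :=
        ENNReal.rpow_le_rpow (ENNReal.le_tsum 0) (by positivity)
    _ ≤ weakLpNorm 𝕜 p x := le_weakLpNorm x hg

lemma tendsto_norm_of_tendsto_weakLpNorm_tail (hp : 0 < p) {x : ℕ → X}
    (h : Tendsto (fun n => weakLpNorm 𝕜 p fun j => x (n + j)) atTop (𝓝 0)) :
    Tendsto (fun n => ‖x n‖) atTop (𝓝 0) := by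
  have h' : Tendsto (fun n => (‖x n‖₊ : ℝ≥0∞)) atTop (𝓝 0) :=
    tendsto_of_tendsto_of_tendsto_of_le_of_le tendsto_const_nhds h (fun _ => zero_le)
      fun n => by simpa using nnnorm_le_weakLpNorm (𝕜 := 𝕜) hp fun j => x (n + j)
  simpa [comp_def] using (ENNReal.tendsto_toReal ENNReal.zero_ne_top).comp h'

lemma weakLpNorm_comp_le (hp : 0 ≤ p) (x : ℕ → X) {f : ℕ → ℕ} (hf : Injective f) :
    weakLpNorm 𝕜 p (x ∘ f) ≤ weakLpNorm 𝕜 p x :=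
  iSup₂_mono fun φ _ => ENNReal.rpow_le_rpow
    (ENNReal.tsum_comp_le_tsum_of_injective hf fun j => (‖φ (x j)‖₊ : ℝ≥0∞) ^ p) (by positivity)

lemma antitone_weakLpNorm_tail (hp : 0 ≤ p) (x : ℕ → X) :
    Antitone fun n => weakLpNorm 𝕜 p fun j => x (n + j) := by
  intro m n hmn
  obtain ⟨d, rfl⟩ := Nat.exists_eq_add_of_le hmn
  simpa [comp_def, add_assoc] using
    weakLpNorm_comp_le (𝕜 := 𝕜) hp (fun j => x (m + j)) (add_right_injective d)

lemma exists_lt_sum_of_lt_weakLpNorm (hp : 0 < p) {x : ℕ → X} {r : ℝ≥0}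
    (h : (r : ℝ≥0∞) < weakLpNorm 𝕜 p x) :
    ∃ φ : X →L[𝕜] 𝕜, ‖φ‖ ≤ 1 ∧ ∃ m, (r : ℝ) ^ p < ∑ j ∈ Finset.range m, ‖φ (x j)‖ ^ p := by
  simp only [weakLpNorm, lt_iSup_iff, Set.mem_ofPred_eq] at h
  obtain ⟨φ, hφ, h⟩ := h
  refine ⟨φ, hφ, ?_⟩
  have h := ENNReal.rpow_lt_rpow h hp
  rw [← ENNReal.rpow_mul, one_div_mul_cancel hp.ne', ENNReal.rpow_one,
    ENNReal.tsum_eq_iSup_nat, lt_iSup_iff] at h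
  obtain ⟨m, hm⟩ := h
  refine ⟨m, (ENNReal.ofReal_lt_ofReal_iff_of_nonneg (by positivity)).1 ?_⟩
  rw [ENNReal.ofReal_sum_of_nonneg fun j _ => by positivity,
    ← ENNReal.ofReal_rpow_of_nonneg r.coe_nonneg hp.le]
  simpa [← ENNReal.ofReal_rpow_of_nonneg (norm_nonneg _) hp.le, ofReal_norm, enorm_eq_nnnorm]
    using hm

end WeakLpNorm

section HolderDual

variable {𝕜 : Type*} [RCLike 𝕜] {p q : ℝ}

noncomputable def holderDual (p : ℝ) (a : 𝕜) : 𝕜 := ((‖a‖ ^ (p - 2) : ℝ) : 𝕜) * starRingEnd 𝕜 a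

lemma norm_holderDual (hp : p ≠ 1) (a : 𝕜) : ‖holderDual p a‖ = ‖a‖ ^ (p - 1) := by
  rcases eq_or_ne a 0 with rfl | ha
  · simp [holderDual, Real.zero_rpow (sub_ne_zero.2 hp)]
  rw [holderDual, norm_mul, RCLike.norm_conj, RCLike.norm_ofReal,
    abs_of_nonneg (by positivity), ← Real.rpow_add_one (norm_ne_zero_iff.2 ha)]
  ring_nf

lemma holderDual_mul_self (hp : p ≠ 0) (a : 𝕜) : holderDual p a * a = ((‖a‖ ^ p : ℝ) : 𝕜) := by
  rcases eq_or_ne a 0 with rfl | ha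
  · simp [Real.zero_rpow hp]
  rw [holderDual, mul_assoc, RCLike.conj_mul, ← RCLike.ofReal_pow, ← RCLike.ofReal_mul,
    ← Real.rpow_natCast, ← Real.rpow_add (norm_pos_iff.2 ha)]
  norm_num

lemma norm_sum_mul_le {ι : Type*} (hpq : p.HolderConjugate q) (s : Finset ι) (c a : ι → 𝕜) :
    ‖∑ i ∈ s, c i * a i‖ ≤ (∑ i ∈ s, ‖c i‖ ^ q) ^ (1 / q) * (∑ i ∈ s, ‖a i‖ ^ p) ^ (1 / p) :=
  calc ‖∑ i ∈ s, c i * a i‖ ≤ ∑ i ∈ s, ‖c i‖ * ‖a i‖ := by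
        simpa only [norm_mul] using norm_sum_le s fun i => c i * a i
    _ ≤ _ := Real.inner_le_Lp_mul_Lq_of_nonneg s hpq.symm (fun _ _ => norm_nonneg _)
        fun _ _ => norm_nonneg _

end HolderDual

section NormingCombination

variable {𝕜 : Type*} [RCLike 𝕜] {X : Type*} [NormedAddCommGroup X] [NormedSpace 𝕜 X]
  {ι : Type*} {p q : ℝ}

lemma exists_norming_combination (hpq : p.HolderConjugate q) (χ : X →L[𝕜] 𝕜) (y : ι → X)
    (s : Finset ι) :
    ∃ z : X, (∀ ψ : X →L[𝕜] 𝕜, ‖ψ z‖ ^ p ≤ ∑ j ∈ s, ‖ψ (y j)‖ ^ p) ∧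
      ‖χ z‖ ^ p = ∑ j ∈ s, ‖χ (y j)‖ ^ p := by
  set S := ∑ j ∈ s, ‖χ (y j)‖ ^ p
  obtain hS | hS := eq_or_lt_of_le (show 0 ≤ S from Finset.sum_nonneg fun j _ => by positivity)
  · exact ⟨0, fun ψ => by rw [map_zero, norm_zero, Real.zero_rpow hpq.ne_zero]; positivity,
      by simpa [Real.zero_rpow hpq.ne_zero] using hS⟩
  set c : ι → 𝕜 := fun j => holderDual p (χ (y j))
  have hc : ∑ j ∈ s, ‖c j‖ ^ q = S := Finset.sum_congr rfl fun j _ => by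
    rw [norm_holderDual hpq.lt.ne', ← Real.rpow_mul (norm_nonneg _), hpq.sub_one_mul_conj]
  refine ⟨((S ^ (-q⁻¹) : ℝ) : 𝕜) • ∑ j ∈ s, c j • y j, fun ψ => ?_, ?_⟩
  · set T := ∑ j ∈ s, ‖ψ (y j)‖ ^ p
    have hT : 0 ≤ T := Finset.sum_nonneg fun j _ => by positivity
    suffices ‖ψ (((S ^ (-q⁻¹) : ℝ) : 𝕜) • ∑ j ∈ s, c j • y j)‖ ≤ T ^ p⁻¹ by
      calc _ ≤ (T ^ p⁻¹) ^ p := Real.rpow_le_rpow (norm_nonneg _) this hpq.nonneg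
        _ = T := by rw [← Real.rpow_mul hT, inv_mul_cancel₀ hpq.ne_zero, Real.rpow_one]
    simp only [map_smul, map_sum, smul_eq_mul, norm_mul, RCLike.norm_ofReal,
      abs_of_nonneg (Real.rpow_nonneg hS.le _)]
    calc S ^ (-q⁻¹) * ‖∑ j ∈ s, c j * ψ (y j)‖ ≤ S ^ (-q⁻¹) * (S ^ (1 / q) * T ^ (1 / p)) := by
          gcongr
          simpa only [hc] using norm_sum_mul_le hpq s c fun j => ψ (y j)
      _ = T ^ p⁻¹ := by
          rw [← mul_assoc, ← Real.rpow_add hS, one_div, neg_add_cancel, Real.rpow_zero, one_mul,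
            one_div]
  · have hχ : χ (((S ^ (-q⁻¹) : ℝ) : 𝕜) • ∑ j ∈ s, c j • y j) = ((S ^ p⁻¹ : ℝ) : 𝕜) := by
      simp only [map_smul, map_sum, smul_eq_mul, c, holderDual_mul_self hpq.ne_zero]
      rw [← RCLike.ofReal_sum, ← RCLike.ofReal_mul]
      congr 1
      change S ^ (-q⁻¹) * S = _
      nth_rewrite 2 [← Real.rpow_one S]
      rw [← Real.rpow_add hS, ← hpq.inv_sub_one]
      ring_nf
    rw [hχ, RCLike.norm_ofReal, abs_of_nonneg (by positivity), ← Real.rpow_mul hS.le,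
      inv_mul_cancel₀ hpq.ne_zero, Real.rpow_one]

end NormingCombination

section Blocks

variable {𝕜 : Type*} [RCLike 𝕜] {X : Type*} [NormedAddCommGroup X] [NormedSpace 𝕜 X]
  {F : Type*} [NormedAddCommGroup F] [NormedSpace 𝕜 F] {p : ℝ}

lemma WeaklyLpSummable.map {y : ℕ → X} (hy : WeaklyLpSummable 𝕜 p y) (u : X →L[𝕜] F) :
    WeaklyLpSummable 𝕜 p fun j => u (y j) :=
  fun φ => hy (φ.comp u)

lemma WeaklyLpSummable.of_le_sum_blocks {y : ℕ → X} (hy : WeaklyLpSummable 𝕜 p y)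
    {B : ℕ → Finset ℕ} (hB : Pairwise (Disjoint on B)) {z : ℕ → X}
    (hz : ∀ k (ψ : X →L[𝕜] 𝕜), ‖ψ (z k)‖ ^ p ≤ ∑ j ∈ B k, ‖ψ (y j)‖ ^ p) :
    WeaklyLpSummable 𝕜 p z := by
  classical
  intro ψ
  refine summable_of_sum_range_le (c := ∑' j, ‖ψ (y j)‖ ^ p) (fun k => by positivity) fun K => ?_
  calc ∑ k ∈ Finset.range K, ‖ψ (z k)‖ ^ p
      ≤ ∑ k ∈ Finset.range K, ∑ j ∈ B k, ‖ψ (y j)‖ ^ p := Finset.sum_le_sum fun k _ => hz k ψ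
    _ = ∑ j ∈ (Finset.range K).biUnion B, ‖ψ (y j)‖ ^ p :=
        (Finset.sum_biUnion (hB.set_pairwise _)).symm
    _ ≤ ∑' j, ‖ψ (y j)‖ ^ p := (hy ψ).sum_le_tsum _ fun j _ => by positivity

lemma exists_block_of_lt_weakLpNorm_tail (hp : 1 < p) (u : X →L[𝕜] F) (y : ℕ → X) {r : ℝ≥0}
    {n : ℕ} (h : (r : ℝ≥0∞) < weakLpNorm 𝕜 p fun j => u (y (n + j))) :
    ∃ m, ∃ z : X, (∀ ψ : X →L[𝕜] 𝕜, ‖ψ z‖ ^ p ≤ ∑ j ∈ Finset.Ico n (n + m), ‖ψ (y j)‖ ^ p) ∧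
      (r : ℝ) < ‖u z‖ := by
  have hp0 : 0 < p := by linarith
  obtain ⟨φ, hφ, m, hm⟩ := exists_lt_sum_of_lt_weakLpNorm hp0 h
  obtain ⟨z, hz, hφz⟩ := exists_norming_combination (Real.HolderConjugate.conjExponent hp)
    (φ.comp u) y (Finset.Ico n (n + m))
  refine ⟨m, z, hz, (Real.rpow_lt_rpow_iff r.coe_nonneg (norm_nonneg _) hp0).1 ?_⟩
  calc (r : ℝ) ^ p < ∑ j ∈ Finset.range m, ‖φ (u (y (n + j)))‖ ^ p := hm
    _ = ‖φ (u z)‖ ^ p := by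
        rw [Finset.sum_Ico_eq_sum_range, add_tsub_cancel_left] at hφz
        exact hφz.symm
    _ ≤ ‖u z‖ ^ p := by
        gcongr
        simpa using φ.le_of_opNorm_le hφ (u z)

theorem uncondLpSummable_map_of_forall_tendsto_norm (hp : 1 < p) (u : X →L[𝕜] F)
    (h : ∀ y : ℕ → X, WeaklyLpSummable 𝕜 p y → Tendsto (fun j => ‖u (y j)‖) atTop (𝓝 0))
    {y : ℕ → X} (hy : WeaklyLpSummable 𝕜 p y) : UncondLpSummable 𝕜 p fun j => u (y j) := by
  refine ⟨hy.map u, ?_⟩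
  set W := fun n => weakLpNorm 𝕜 p fun j => u (y (n + j))
  have hW : Tendsto W atTop (𝓝 (⨅ n, W n)) :=
    tendsto_atTop_iInf (antitone_weakLpNorm_tail (by linarith) fun j => u (y j))
  by_contra hW0
  obtain ⟨r, hr, hrW⟩ := ENNReal.lt_iff_exists_nnreal_btwn.1
    (pos_iff_ne_zero.2 fun h0 => hW0 (h0 ▸ hW))
  choose M Z hZ hZr using fun n =>
    exists_block_of_lt_weakLpNorm_tail hp u y (hrW.trans_le (iInf_le W n))
  set N : ℕ → ℕ := fun k => (fun n => n + M n)^[k] 0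
  have hN : ∀ k, N (k + 1) = N k + M (N k) := fun k => iterate_succ_apply' _ _ _
  have hNmono : Monotone N := monotone_nat_of_le_succ fun k => (hN k).symm ▸ Nat.le_add_right _ _
  have hdisj : Pairwise (Disjoint on fun k => Finset.Ico (N k) (N (k + 1))) :=
    (pairwise_disjoint_on _).2 fun k l hkl =>
      (Finset.Ico_disjoint_Ico_consecutive _ _ _).mono_right
        (Finset.Ico_subset_Ico_left (hNmono hkl))
  have hz : WeaklyLpSummable 𝕜 p fun k => Z (N k) :=
    hy.of_le_sum_blocks hdisj fun k ψ => hN k ▸ hZ (N k) ψ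
  have hr' : (0 : ℝ) < r := mod_cast hr
  obtain ⟨k, hk⟩ := ((h _ hz).eventually (gt_mem_nhds hr')).exists
  exact (hZr (N k)).not_gt hk

end Blocks

theorem stmt_12_general {𝕜 : Type*} [RCLike 𝕜] {F : Type*} [NormedAddCommGroup F] [NormedSpace 𝕜 F]
    {p : ℝ} (hp : 1 < p) [Fact (1 ≤ ENNReal.ofReal (p / (p - 1)))]
    (u : lp (fun _ : ℕ => 𝕜) (ENNReal.ofReal (p / (p - 1))) →L[𝕜] F) :
    (∀ y : ℕ → lp (fun _ : ℕ => 𝕜) (ENNReal.ofReal (p / (p - 1))),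
        WeaklyLpSummable 𝕜 p y → Tendsto (fun j => ‖u (y j)‖) atTop (𝓝 0)) ↔
    (∀ y : ℕ → lp (fun _ : ℕ => 𝕜) (ENNReal.ofReal (p / (p - 1))),
        WeaklyLpSummable 𝕜 p y → UncondLpSummable 𝕜 p fun j => u (y j)) :=
  ⟨fun h _ hy => uncondLpSummable_map_of_forall_tendsto_norm hp u h hy,
    fun h y hy => tendsto_norm_of_tendsto_weakLpNorm_tail (𝕜 := 𝕜) (by linarith) (h y hy).2⟩

/-- For a bounded operator `u : ℓ_{p*} → F` (`1 < p < ∞`,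
`p* = p/(p-1)`), the following are equivalent: (i) `‖u(y_j)‖ → 0` for every weakly
`p`-summable `(y_j)` in `ℓ_{p*}`; (ii) `(u(y_j))_j` is unconditionally `p`-summable
for every weakly `p`-summable `(y_j)` in `ℓ_{p*}`. -/
theorem stmt_12 {𝕜 : Type*} [RCLike 𝕜] {F : Type*} [NormedAddCommGroup F] [NormedSpace 𝕜 F]
    [CompleteSpace F] {p : ℝ} (hp : 1 < p) [Fact (1 ≤ ENNReal.ofReal (p / (p - 1)))]
    (u : lp (fun _ : ℕ => 𝕜) (ENNReal.ofReal (p / (p - 1))) →L[𝕜] F) :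
    (∀ y : ℕ → lp (fun _ : ℕ => 𝕜) (ENNReal.ofReal (p / (p - 1))),
        WeaklyLpSummable 𝕜 p y → Tendsto (fun j => ‖u (y j)‖) atTop (𝓝 0)) ↔
    (∀ y : ℕ → lp (fun _ : ℕ => 𝕜) (ENNReal.ofReal (p / (p - 1))),
        WeaklyLpSummable 𝕜 p y → UncondLpSummable 𝕜 p fun j => u (y j)) :=
  stmt_12_general hp u
end

section
/- Let E be a Banach space, 1 < p < ∞ and p* = p/(p−1). For a bounded linear operator u : ℓ_{p*} → E, the sequence (u(e_j))_{j=1}^∞ is mid p-summable in E if and only if for every weakly p-summable sequence (y_j)_{j=1}^∞ in ℓ_{p*} the sequence (u(y_j))_{j=1}^∞ is mid p-summable in E; and in this case ‖(u(e_j))_{j=1}^∞‖_{mid,p} = sup { ‖(u(y_j))_{j=1}^∞‖_{mid,p} : (y_j)_{j=1}^∞ weakly p-summable in ℓ_{p*} with ‖(y_j)‖_{w,p} ≤ 1 }. -/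
/-!
For a functional `ψ` on `ℓ_{p*}`, the duality `(ℓ_{p*})* ≅ ℓ_p` gives `∑_j |ψ(e_j)|^p = ‖ψ‖^p`.
So `(e_j)` has weak `p`-norm at most one, and for weakly `p`-summable `(φ_n)` in `E*`,
`∑_n ∑_j |φ_n(u y_j)|^p ≤ ‖(y_j)‖_{w,p}^p ∑_n ‖φ_n ∘ u‖^p = ‖(y_j)‖_{w,p}^p ∑_n ∑_j |φ_n(u e_j)|^p`,
that is `‖(u y_j)‖_{mid,p} ≤ ‖(y_j)‖_{w,p} ‖(u e_j)‖_{mid,p}`. Both claims follow, because a weakly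
`p`-summable sequence has finite weak `p`-norm by the closed graph theorem.
-/

open Filter Topology
open scoped ENNReal NNReal

/-- The mid `p`-"norm" of a sequence, valued in `ℝ≥0∞`: the supremum of
`(∑_n ∑_j |φ_n(x_j)|^p)^{1/p}` over all weakly `p`-summable sequences `(φ_n)` in the dual
with weak `p`-norm at most one.  A sequence is mid `p`-summable iff this is `< ⊤`. -/
noncomputable def midLpNorm (𝕜 : Type*) [RCLike 𝕜] {X : Type*} [NormedAddCommGroup X]
    [NormedSpace 𝕜 X] (p : ℝ) (x : ℕ → X) : ℝ≥0∞ :=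
  ⨆ φ ∈ {φ : ℕ → X →L[𝕜] 𝕜 | WeaklyLpSummable 𝕜 p φ ∧ weakLpNorm 𝕜 p φ ≤ 1},
    (∑' n, ∑' j, (‖φ n (x j)‖₊ : ℝ≥0∞) ^ p) ^ (1 / p)

lemma coe_nnnorm_rpow_eq_ofReal {Y : Type*} [NormedAddCommGroup Y] {p : ℝ} (hp : 0 ≤ p) (x : Y) :
    (‖x‖₊ : ℝ≥0∞) ^ p = ENNReal.ofReal (‖x‖ ^ p) := by
  rw [← ENNReal.ofReal_rpow_of_nonneg (norm_nonneg _) hp, ofReal_norm, enorm_eq_nnnorm]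

lemma tsum_coe_nnnorm_rpow_eq_ofReal {Y : Type*} [NormedAddCommGroup Y] {p s : ℝ} (hp : 0 ≤ p)
    {x : ℕ → Y} (h : HasSum (fun j => ‖x j‖ ^ p) s) :
    ∑' j, (‖x j‖₊ : ℝ≥0∞) ^ p = ENNReal.ofReal s := by
  simp only [coe_nnnorm_rpow_eq_ofReal hp]
  rw [← ENNReal.ofReal_tsum_of_nonneg (fun j => by positivity) h.summable, h.tsum_eq]

section WeakNorms

variable {𝕜 : Type*} [RCLike 𝕜] {X : Type*} [NormedAddCommGroup X] [NormedSpace 𝕜 X] {p : ℝ}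

lemma tsum_rpow_le_weakLpNorm_rpow (hp : 0 < p) (x : ℕ → X) {φ : X →L[𝕜] 𝕜} (hφ : ‖φ‖ ≤ 1) :
    ∑' j, (‖φ (x j)‖₊ : ℝ≥0∞) ^ p ≤ weakLpNorm 𝕜 p x ^ p := by
  rw [← ENNReal.rpow_inv_le_iff hp, ← one_div]
  exact le_biSup (fun φ : X →L[𝕜] 𝕜 => (∑' j, (‖φ (x j)‖₊ : ℝ≥0∞) ^ p) ^ (1 / p)) hφ

lemma weakLpNorm_le (hp : 0 < p) {x : ℕ → X} {C : ℝ≥0∞}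
    (h : ∀ φ : X →L[𝕜] 𝕜, ‖φ‖ ≤ 1 → ∑' j, (‖φ (x j)‖₊ : ℝ≥0∞) ^ p ≤ C ^ p) :
    weakLpNorm 𝕜 p x ≤ C :=
  iSup₂_le fun φ hφ => by rw [one_div, ENNReal.rpow_inv_le_iff hp]; exact h φ hφ

lemma tsum_tsum_rpow_le_midLpNorm_rpow (hp : 0 < p) (x : ℕ → X) {φ : ℕ → X →L[𝕜] 𝕜}
    (hφ : WeaklyLpSummable 𝕜 p φ) (hφ_le : weakLpNorm 𝕜 p φ ≤ 1) :
    ∑' n, ∑' j, (‖φ n (x j)‖₊ : ℝ≥0∞) ^ p ≤ midLpNorm 𝕜 p x ^ p := by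
  rw [← ENNReal.rpow_inv_le_iff hp, ← one_div]
  exact le_biSup (fun φ : ℕ → X →L[𝕜] 𝕜 => (∑' n, ∑' j, (‖φ n (x j)‖₊ : ℝ≥0∞) ^ p) ^ (1 / p))
    (show φ ∈ {φ | WeaklyLpSummable 𝕜 p φ ∧ weakLpNorm 𝕜 p φ ≤ 1} from ⟨hφ, hφ_le⟩)

lemma midLpNorm_le (hp : 0 < p) {x : ℕ → X} {C : ℝ≥0∞}
    (h : ∀ φ : ℕ → X →L[𝕜] 𝕜, WeaklyLpSummable 𝕜 p φ → weakLpNorm 𝕜 p φ ≤ 1 →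
      ∑' n, ∑' j, (‖φ n (x j)‖₊ : ℝ≥0∞) ^ p ≤ C ^ p) :
    midLpNorm 𝕜 p x ≤ C :=
  iSup₂_le fun φ hφ => by rw [one_div, ENNReal.rpow_inv_le_iff hp]; exact h φ hφ.1 hφ.2

lemma tsum_rpow_le_nnnorm_rpow_mul_weakLpNorm_rpow (hp : 0 < p) (x : ℕ → X)
    (φ : X →L[𝕜] 𝕜) :
    ∑' j, (‖φ (x j)‖₊ : ℝ≥0∞) ^ p ≤ (‖φ‖₊ : ℝ≥0∞) ^ p * weakLpNorm 𝕜 p x ^ p := by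
  rcases eq_or_ne φ 0 with rfl | hφ
  · simp [ENNReal.zero_rpow_of_pos hp]
  have hφ_pos : 0 < ‖φ‖ := norm_pos_iff.mpr hφ
  set φ₁ : X →L[𝕜] 𝕜 := (‖φ‖⁻¹ : 𝕜) • φ
  have hφ₁ : ‖φ₁‖ ≤ 1 := by
    rw [norm_smul, norm_inv, RCLike.norm_ofReal, abs_norm, inv_mul_cancel₀ hφ_pos.ne']
  have hscale : ∀ v, (‖φ v‖₊ : ℝ≥0∞) ^ p = (‖φ‖₊ : ℝ≥0∞) ^ p * (‖φ₁ v‖₊ : ℝ≥0∞) ^ p := by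
    intro v
    have hv : φ v = (‖φ‖ : 𝕜) * φ₁ v := by
      have : (‖φ‖ : 𝕜) ≠ 0 := RCLike.ofReal_ne_zero.mpr hφ_pos.ne'
      simp [φ₁, mul_inv_cancel_left₀ this]
    have hv_nnnorm : ‖φ v‖₊ = ‖φ‖₊ * ‖φ₁ v‖₊ := by
      ext; simp only [coe_nnnorm, NNReal.coe_mul, hv, norm_mul, RCLike.norm_ofReal, abs_norm]
    rw [hv_nnnorm, ENNReal.coe_mul, ENNReal.mul_rpow_of_nonneg _ _ hp.le]
  simp only [hscale, ENNReal.tsum_mul_left]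
  gcongr
  exact tsum_rpow_le_weakLpNorm_rpow hp x hφ₁

end WeakNorms

lemma LinearMap.continuous_lp_of_continuous_apply {𝕜 : Type*} [NontriviallyNormedField 𝕜]
    {ι : Type*} {E : ι → Type*} [∀ i, NormedAddCommGroup (E i)] [∀ i, NormedSpace 𝕜 (E i)]
    [∀ i, CompleteSpace (E i)] {r : ℝ≥0∞} [Fact (1 ≤ r)] {F : Type*} [NormedAddCommGroup F]
    [NormedSpace 𝕜 F] [CompleteSpace F] (T : F →ₗ[𝕜] lp E r)
    (hT : ∀ i, Continuous fun x => T x i) : Continuous T := by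
  refine T.continuous_of_seq_closed_graph fun v x z hv hTv => lp.ext (funext fun i => ?_)
  exact tendsto_nhds_unique (((lp.evalCLM 𝕜 E r i).continuous.tendsto z).comp hTv)
    (((hT i).tendsto x).comp hv)

section WeaklySummable

variable {𝕜 : Type*} [RCLike 𝕜] {X : Type*} [NormedAddCommGroup X] [NormedSpace 𝕜 X] {p : ℝ}

lemma WeaklyLpSummable.weakLpNorm_lt_top (hp : 1 ≤ p) {y : ℕ → X}
    (hy : WeaklyLpSummable 𝕜 p y) : weakLpNorm 𝕜 p y < ⊤ := by
  have hp₀ : 0 < p := one_pos.trans_le hp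
  have : Fact (1 ≤ ENNReal.ofReal p) := ⟨by simpa using ENNReal.ofReal_le_ofReal hp⟩
  have htoReal : (ENNReal.ofReal p).toReal = p := ENNReal.toReal_ofReal hp₀.le
  let T : (X →L[𝕜] 𝕜) →ₗ[𝕜] lp (fun _ : ℕ => 𝕜) (ENNReal.ofReal p) :=
    { toFun := fun φ => ⟨fun j => φ (y j), memℓp_gen (by rw [htoReal]; exact hy φ)⟩
      map_add' := fun _ _ => rfl
      map_smul' := fun _ _ => rfl }
  let T' : (X →L[𝕜] 𝕜) →L[𝕜] lp (fun _ : ℕ => 𝕜) (ENNReal.ofReal p) :=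
    ⟨T, T.continuous_lp_of_continuous_apply fun j =>
      (ContinuousLinearMap.apply 𝕜 𝕜 (y j)).continuous⟩
  refine (weakLpNorm_le hp₀ fun φ hφ => ?_).trans_lt (ENNReal.coe_lt_top (r := ‖T'‖₊))
  have hsum : HasSum (fun j => ‖φ (y j)‖ ^ p) (‖T' φ‖ ^ p) := by
    have h := lp.hasSum_norm (by rw [htoReal]; exact hp₀) (T' φ)
    rw [htoReal] at h
    exact h
  rw [tsum_coe_nnnorm_rpow_eq_ofReal hp₀.le hsum, ← coe_nnnorm_rpow_eq_ofReal hp₀.le]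
  gcongr
  exact (T'.le_opNorm φ).trans (mul_le_of_le_one_right (norm_nonneg _) hφ)

end WeaklySummable

section LpDual

variable {𝕜 : Type*} [RCLike 𝕜] {p : ℝ}

open ComplexConjugate in
lemma conj_mul_norm_rpow_mul_self (hp : 0 < p) (a : 𝕜) :
    conj a * ((‖a‖ ^ (p - 2) : ℝ) : 𝕜) * a = ((‖a‖ ^ p : ℝ) : 𝕜) := by
  rcases eq_or_ne a 0 with rfl | ha
  · simp [Real.zero_rpow hp.ne']
  have ha' : 0 < ‖a‖ := norm_pos_iff.mpr ha
  rw [mul_right_comm, RCLike.conj_mul, ← RCLike.ofReal_pow, ← RCLike.ofReal_mul,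
    ← Real.rpow_natCast, ← Real.rpow_add ha']
  norm_num

open ComplexConjugate in
lemma norm_conj_mul_norm_rpow (hp : p ≠ 1) (a : 𝕜) :
    ‖conj a * ((‖a‖ ^ (p - 2) : ℝ) : 𝕜)‖ = ‖a‖ ^ (p - 1) := by
  rcases eq_or_ne a 0 with rfl | ha
  · simp [Real.zero_rpow (sub_ne_zero.mpr hp)]
  have ha' : 0 < ‖a‖ := norm_pos_iff.mpr ha
  rw [norm_mul, RCLike.norm_conj, RCLike.norm_ofReal, abs_of_nonneg (by positivity),
    ← Real.rpow_one_add' ha'.le (fun h => hp (by linarith))]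
  ring_nf

variable {q : ℝ≥0∞} [Fact (1 ≤ q)]

lemma ContinuousLinearMap.apply_lp_single (ψ : lp (fun _ : ℕ => 𝕜) q →L[𝕜] 𝕜) (j : ℕ) (c : 𝕜) :
    ψ (lp.single q j c) = c * ψ (lp.single q j 1) := by
  rw [← smul_eq_mul, ← map_smul, ← lp.single_smul, smul_eq_mul, mul_one]

open ComplexConjugate in
lemma sum_norm_apply_lp_single_rpow_le (hpq : p.HolderConjugate q.toReal)
    (ψ : lp (fun _ : ℕ => 𝕜) q →L[𝕜] 𝕜) (s : Finset ℕ) :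
    ∑ j ∈ s, ‖ψ (lp.single q j 1)‖ ^ p ≤ ‖ψ‖ ^ p := by
  set a : ℕ → 𝕜 := fun j => ψ (lp.single q j 1)
  set A := ∑ j ∈ s, ‖a j‖ ^ p
  -- the vector against which Hölder's inequality for `(a j)_{j ∈ s}` is an equality
  set x := ∑ j ∈ s, lp.single q j (conj (a j) * ((‖a j‖ ^ (p - 2) : ℝ) : 𝕜))
  have hψx : ψ x = A := by
    rw [map_sum, RCLike.ofReal_sum]
    refine Finset.sum_congr rfl fun j _ => ?_
    rw [ψ.apply_lp_single, conj_mul_norm_rpow_mul_self hpq.pos]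
  have hx : ‖x‖ ^ q.toReal = A := by
    rw [lp.norm_sum_single hpq.symm.pos]
    refine Finset.sum_congr rfl fun j _ => ?_
    rw [norm_conj_mul_norm_rpow hpq.lt.ne', ← Real.rpow_mul (norm_nonneg _),
      hpq.sub_one_mul_conj]
  have hA : A ≤ ‖ψ‖ * ‖x‖ := by
    calc A = ‖ψ x‖ := by rw [hψx, RCLike.norm_ofReal, abs_of_nonneg (by positivity)]
      _ ≤ ‖ψ‖ * ‖x‖ := ψ.le_opNorm x
  rcases (norm_nonneg x).eq_or_lt with hx0 | hx0
  · rw [← hx, ← hx0, Real.zero_rpow hpq.symm.ne_zero]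
    positivity
  have hxψ : ‖x‖ ^ (q.toReal - 1) ≤ ‖ψ‖ := by
    rw [Real.rpow_sub_one hx0.ne', div_le_iff₀ hx0, hx]
    exact hA
  calc A = (‖x‖ ^ (q.toReal - 1)) ^ p := by
        rw [← Real.rpow_mul (norm_nonneg _), hpq.symm.sub_one_mul_conj, hx]
    _ ≤ ‖ψ‖ ^ p := Real.rpow_le_rpow (by positivity) hxψ hpq.nonneg

lemma norm_le_tsum_norm_apply_lp_single_rpow (hpq : p.HolderConjugate q.toReal)
    (ψ : lp (fun _ : ℕ => 𝕜) q →L[𝕜] 𝕜) (hsum : Summable fun j => ‖ψ (lp.single q j 1)‖ ^ p) :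
    ‖ψ‖ ≤ (∑' j, ‖ψ (lp.single q j 1)‖ ^ p) ^ (1 / p) := by
  refine ψ.opNorm_le_bound (by positivity) fun b => ?_
  have hq : q ≠ ⊤ := (ENNReal.toReal_pos_iff.mp hpq.symm.pos).2.ne
  have hψb : HasSum (fun j => b j * ψ (lp.single q j 1)) (ψ b) := by
    convert (lp.hasSum_single hq b).mapL ψ using 2 with j
    exact (ψ.apply_lp_single j (b j)).symm
  obtain ⟨hsum_mul, hholder⟩ := Real.summable_and_inner_le_Lp_mul_Lq_tsum_of_nonneg hpq.symm
    (fun j => norm_nonneg (b j)) (fun j => norm_nonneg (ψ (lp.single q j 1)))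
    ((lp.memℓp b).summable hpq.symm.pos) hsum
  rw [← lp.norm_eq_tsum_rpow hpq.symm.pos] at hholder
  calc ‖ψ b‖ ≤ ∑' j, ‖b j‖ * ‖ψ (lp.single q j 1)‖ := by
        rw [← hψb.tsum_eq]
        simpa only [norm_mul] using norm_tsum_le_tsum_norm
          (f := fun j => b j * ψ (lp.single q j 1)) (by simpa only [norm_mul] using hsum_mul)
    _ ≤ _ := hholder.trans_eq (mul_comm _ _)

lemma hasSum_norm_apply_lp_single_rpow (hpq : p.HolderConjugate q.toReal)
    (ψ : lp (fun _ : ℕ => 𝕜) q →L[𝕜] 𝕜) :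
    HasSum (fun j => ‖ψ (lp.single q j 1)‖ ^ p) (‖ψ‖ ^ p) := by
  have hsum := summable_of_sum_le (fun j => by positivity) (sum_norm_apply_lp_single_rpow_le hpq ψ)
  convert hsum.hasSum
  refine le_antisymm ?_ (hsum.tsum_le_of_sum_le (sum_norm_apply_lp_single_rpow_le hpq ψ))
  rw [← Real.rpow_le_rpow_iff (by positivity) (by positivity) hpq.one_div_pos, ← Real.rpow_mul
    (norm_nonneg _), mul_one_div_cancel hpq.ne_zero, Real.rpow_one]
  exact norm_le_tsum_norm_apply_lp_single_rpow hpq ψ hsum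

lemma tsum_coe_nnnorm_apply_lp_single_rpow (hpq : p.HolderConjugate q.toReal)
    (ψ : lp (fun _ : ℕ => 𝕜) q →L[𝕜] 𝕜) :
    ∑' j, (‖ψ (lp.single q j 1)‖₊ : ℝ≥0∞) ^ p = (‖ψ‖₊ : ℝ≥0∞) ^ p := by
  rw [tsum_coe_nnnorm_rpow_eq_ofReal hpq.nonneg (hasSum_norm_apply_lp_single_rpow hpq ψ),
    coe_nnnorm_rpow_eq_ofReal hpq.nonneg]

lemma weaklyLpSummable_lp_single (hpq : p.HolderConjugate q.toReal) :
    WeaklyLpSummable 𝕜 p fun j => lp.single (E := fun _ : ℕ => 𝕜) q j 1 :=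
  fun ψ => (hasSum_norm_apply_lp_single_rpow hpq ψ).summable

lemma weakLpNorm_lp_single_le_one (hpq : p.HolderConjugate q.toReal) :
    weakLpNorm 𝕜 p (fun j => lp.single (E := fun _ : ℕ => 𝕜) q j 1) ≤ 1 := by
  refine weakLpNorm_le hpq.pos fun ψ hψ => ?_
  rw [tsum_coe_nnnorm_apply_lp_single_rpow hpq, ENNReal.one_rpow]
  exact ENNReal.rpow_le_one (by exact_mod_cast hψ) hpq.nonneg

lemma midLpNorm_comp_le {E : Type*} [NormedAddCommGroup E] [NormedSpace 𝕜 E]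
    (hpq : p.HolderConjugate q.toReal) (u : lp (fun _ : ℕ => 𝕜) q →L[𝕜] E)
    (y : ℕ → lp (fun _ : ℕ => 𝕜) q) :
    midLpNorm 𝕜 p (fun j => u (y j)) ≤
      weakLpNorm 𝕜 p y * midLpNorm 𝕜 p (fun j => u (lp.single q j 1)) := by
  refine midLpNorm_le hpq.pos fun φ hφ hφ_le => ?_
  calc ∑' n, ∑' j, (‖φ n (u (y j))‖₊ : ℝ≥0∞) ^ p
      ≤ ∑' n, (‖(φ n).comp u‖₊ : ℝ≥0∞) ^ p * weakLpNorm 𝕜 p y ^ p :=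
        ENNReal.tsum_le_tsum fun n =>
          tsum_rpow_le_nnnorm_rpow_mul_weakLpNorm_rpow hpq.pos y ((φ n).comp u)
    _ = (∑' n, ∑' j, (‖φ n (u (lp.single q j 1))‖₊ : ℝ≥0∞) ^ p) * weakLpNorm 𝕜 p y ^ p := by
        rw [ENNReal.tsum_mul_right]
        congr 2 with n
        exact (tsum_coe_nnnorm_apply_lp_single_rpow hpq ((φ n).comp u)).symm
    _ ≤ midLpNorm 𝕜 p (fun j => u (lp.single q j 1)) ^ p * weakLpNorm 𝕜 p y ^ p := by
        gcongr
        exact tsum_tsum_rpow_le_midLpNorm_rpow hpq.pos _ hφ hφ_le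
    _ = (weakLpNorm 𝕜 p y * midLpNorm 𝕜 p (fun j => u (lp.single q j 1))) ^ p := by
        rw [ENNReal.mul_rpow_of_nonneg _ _ hpq.nonneg, mul_comm]

end LpDual

theorem stmt_16_general {𝕜 : Type*} [RCLike 𝕜] {E : Type*} [NormedAddCommGroup E] [NormedSpace 𝕜 E]
    {p : ℝ} (hp : 1 < p) [Fact (1 ≤ ENNReal.ofReal (p / (p - 1)))]
    (u : lp (fun _ : ℕ => 𝕜) (ENNReal.ofReal (p / (p - 1))) →L[𝕜] E) :
    ((midLpNorm 𝕜 p fun j => u (lp.single (ENNReal.ofReal (p / (p - 1))) j 1)) < ⊤ ↔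
      ∀ y : ℕ → lp (fun _ : ℕ => 𝕜) (ENNReal.ofReal (p / (p - 1))),
        WeaklyLpSummable 𝕜 p y → (midLpNorm 𝕜 p fun j => u (y j)) < ⊤) ∧
    ((midLpNorm 𝕜 p fun j => u (lp.single (ENNReal.ofReal (p / (p - 1))) j 1)) < ⊤ →
      (midLpNorm 𝕜 p fun j => u (lp.single (ENNReal.ofReal (p / (p - 1))) j 1)) =
        ⨆ y ∈ {y : ℕ → lp (fun _ : ℕ => 𝕜) (ENNReal.ofReal (p / (p - 1))) |
            WeaklyLpSummable 𝕜 p y ∧ weakLpNorm 𝕜 p y ≤ 1},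
          midLpNorm 𝕜 p fun j => u (y j)) := by
  have hpq : p.HolderConjugate (ENNReal.ofReal (p / (p - 1))).toReal := by
    rw [ENNReal.toReal_ofReal (div_nonneg (by linarith) (by linarith))]
    exact Real.HolderConjugate.conjExponent hp
  have hbound := midLpNorm_comp_le hpq u
  refine ⟨⟨fun h y hy => (hbound y).trans_lt (ENNReal.mul_lt_top (hy.weakLpNorm_lt_top hp.le) h),
    fun h => h _ (weaklyLpSummable_lp_single hpq)⟩, fun _ => le_antisymm ?_ ?_⟩
  · exact le_iSup₂ (f := fun y (_ : y ∈ {y | WeaklyLpSummable 𝕜 p y ∧ weakLpNorm 𝕜 p y ≤ 1}) =>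
      midLpNorm 𝕜 p fun j => u (y j)) _
      ⟨weaklyLpSummable_lp_single hpq, weakLpNorm_lp_single_le_one hpq⟩
  · exact iSup₂_le fun y hy => ((hbound y).trans (mul_le_mul_left hy.2 _)).trans_eq (one_mul _)

/-- For `1 < p < ∞`, `p* = p/(p-1)` and a bounded operator
`u : ℓ_{p*} → E`: `(u(e_j))_j` is mid `p`-summable iff `(u(y_j))_j` is mid `p`-summable
for every weakly `p`-summable `(y_j)` in `ℓ_{p*}`, in which case
`‖(u(e_j))_j‖_{mid,p} = sup { ‖(u(y_j))_j‖_{mid,p} : ‖(y_j)‖_{w,p} ≤ 1 }`. -/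
theorem stmt_16 {𝕜 : Type*} [RCLike 𝕜] {E : Type*} [NormedAddCommGroup E] [NormedSpace 𝕜 E]
    [CompleteSpace E] {p : ℝ} (hp : 1 < p) [Fact (1 ≤ ENNReal.ofReal (p / (p - 1)))]
    (u : lp (fun _ : ℕ => 𝕜) (ENNReal.ofReal (p / (p - 1))) →L[𝕜] E) :
    ((midLpNorm 𝕜 p fun j => u (lp.single (ENNReal.ofReal (p / (p - 1))) j 1)) < ⊤ ↔
      ∀ y : ℕ → lp (fun _ : ℕ => 𝕜) (ENNReal.ofReal (p / (p - 1))),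
        WeaklyLpSummable 𝕜 p y → (midLpNorm 𝕜 p fun j => u (y j)) < ⊤) ∧
    ((midLpNorm 𝕜 p fun j => u (lp.single (ENNReal.ofReal (p / (p - 1))) j 1)) < ⊤ →
      (midLpNorm 𝕜 p fun j => u (lp.single (ENNReal.ofReal (p / (p - 1))) j 1)) =
        ⨆ y ∈ {y : ℕ → lp (fun _ : ℕ => 𝕜) (ENNReal.ofReal (p / (p - 1))) |
            WeaklyLpSummable 𝕜 p y ∧ weakLpNorm 𝕜 p y ≤ 1},
          midLpNorm 𝕜 p fun j => u (y j)) :=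
  stmt_16_general hp u
end
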